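/- For an integer n > 3, there exists an integer x with 0 < x < n - 2 such that φ(n + x) + 1 = n + x, where φ is Euler's totient function. (This is a reformulation of Bertrand's postulate.) -/

import Mathlib

/-!
Take `x = p - n` for a prime `p` with `n < p < 2n - 2`; such a prime exists by Erdős's proof of
Bertrand's postulate. If there were none, the only prime in `(n, 2n]` could be `2n - 1` (`2n - 2`
and `2n` are even), so `C(2n, n) ≤ (2n)^√(2n) · 4^(2n/3) · 2n`: the primes up to `2n/3` contribute
at most `(2n)^√(2n) · 4^(2n/3)`, those in `(2n/3, n]` do not divide `C(2n, n)`, and `2n - 1`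
contributes at most `2n`. Together with `4^n < n · C(2n, n)` this is impossible for `n ≥ 512`,
by concavity of the logarithm of the ratio; below `512` a chain of primes covers every `n`.
-/

open Finset Real

/-- The logarithm of `2x² (2x)^√(2x) / 4^(x/3)`. -/
noncomputable def bertrandLogRatio (x : ℝ) : ℝ :=
  log 2 + 2 * log x + √(2 * x) * log (2 * x) - log 4 / 3 * x

theorem concaveOn_bertrandLogRatio : ConcaveOn ℝ (Set.Ioi 1) bertrandLogRatio := by
  have hlog : ConcaveOn ℝ (Set.Ioi 1) log :=
    strictConcaveOn_log_Ioi.concaveOn.subset (Set.Ioi_subset_Ioi zero_le_one) (convex_Ioi 1)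
  have hsqrt : ConcaveOn ℝ (Set.Ioi 1) fun x : ℝ => √(2 * x) * log (2 * x) :=
    (strictConcaveOn_sqrt_mul_log_Ioi.concaveOn.comp_linearMap
      ((2 : ℝ) • (LinearMap.id : ℝ →ₗ[ℝ] ℝ))).subset
      (fun x (hx : 1 < x) => show 1 < 2 * x by linarith) (convex_Ioi 1)
  have hlin : ConvexOn ℝ (Set.Ioi 1) fun x : ℝ => log 4 / 3 * x :=
    (convexOn_id (convex_Ioi 1)).smul (by positivity)
  exact (((concaveOn_const _ (convex_Ioi 1)).add (hlog.smul zero_le_two)).add hsqrt).sub hlin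

theorem bertrandLogRatio_18_nonneg : 0 ≤ bertrandLogRatio 18 := by
  have h36 : √(2 * 18 : ℝ) = 6 := by rw [sqrt_eq_iff_mul_self_eq] <;> norm_num
  have h4 : log 4 ≤ log 36 := log_le_log (by norm_num) (by norm_num)
  have h2 : 0 < log 2 := log_pos one_lt_two
  have h18 : 0 ≤ log 18 := log_nonneg (by norm_num)
  rw [bertrandLogRatio, h36]
  norm_num
  linarith

theorem bertrandLogRatio_512_nonpos : bertrandLogRatio 512 ≤ 0 := by
  have h1024 : √(2 * 512 : ℝ) = 32 := by rw [sqrt_eq_iff_mul_self_eq] <;> norm_num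
  have hpow : ∀ k : ℕ, log ((2 : ℝ) ^ k) = k * log 2 := fun k => by rw [log_pow]
  rw [bertrandLogRatio, h1024]
  simp only [show (512 : ℝ) = 2 ^ 9 by norm_num, show (2 * 2 ^ 9 : ℝ) = 2 ^ 10 by norm_num,
    show (4 : ℝ) = 2 ^ 2 by norm_num, hpow]
  linarith [log_pos one_lt_two]

theorem bertrandLogRatio_nonpos {x : ℝ} (hx : 512 ≤ x) : bertrandLogRatio x ≤ 0 :=
  (concaveOn_bertrandLogRatio.right_le_of_le_left'' (x := 18) (by norm_num)
    (by simp only [Set.mem_Ioi]; linarith) (by norm_num) hx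
    (bertrandLogRatio_512_nonpos.trans bertrandLogRatio_18_nonneg)).trans
    bertrandLogRatio_512_nonpos

theorem two_mul_sq_mul_rpow_sqrt_le {x : ℝ} (hx : 512 ≤ x) :
    2 * x ^ 2 * (2 * x) ^ √(2 * x) ≤ 4 ^ (x / 3) := by
  have hx0 : 0 < x := by linarith
  rw [← log_le_log_iff (by positivity) (by positivity), log_mul (by positivity) (by positivity),
    log_mul (by positivity) (by positivity), log_pow, log_rpow (by positivity),
    log_rpow (by positivity)]
  have := bertrandLogRatio_nonpos hx
  rw [bertrandLogRatio] at this
  push_cast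
  linarith

theorem two_mul_sq_mul_pow_sqrt_mul_four_pow_le {n : ℕ} (hn : 512 ≤ n) :
    2 * n ^ 2 * (2 * n) ^ Nat.sqrt (2 * n) * 4 ^ (2 * n / 3) ≤ 4 ^ n := by
  rw [← Nat.cast_le (α := ℝ)]
  push_cast
  have h2n : (1 : ℝ) ≤ 2 * n := by norm_cast; omega
  calc 2 * (n : ℝ) ^ 2 * (2 * n) ^ Nat.sqrt (2 * n) * 4 ^ (2 * n / 3)
      ≤ 2 * (n : ℝ) ^ 2 * (2 * n) ^ √(2 * n) * 4 ^ (2 * n / 3 : ℝ) := by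
        rw [← rpow_natCast (2 * (n : ℝ)), ← rpow_natCast (4 : ℝ)]
        gcongr
        · exact_mod_cast nat_sqrt_le_real_sqrt
        · norm_num
        · exact Nat.cast_div_le.trans (by norm_cast)
    _ ≤ 4 ^ ((n : ℝ) / 3) * 4 ^ (2 * n / 3 : ℝ) := by
        gcongr
        exact two_mul_sq_mul_rpow_sqrt_le (by exact_mod_cast hn)
    _ = 4 ^ n := by rw [← rpow_add four_pos, ← rpow_natCast]; ring_nf

theorem prod_pow_factorization_centralBinom_le {n : ℕ} (hn : 0 < n) :
    ∏ p ∈ range (2 * n / 3 + 1), p ^ n.centralBinom.factorization p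
      ≤ (2 * n) ^ Nat.sqrt (2 * n) * 4 ^ (2 * n / 3) := by
  set f : ℕ → ℕ := fun p => p ^ n.centralBinom.factorization p
  have hprimes : ∏ p ∈ range (2 * n / 3 + 1), f p = ∏ p ∈ Nat.primesBelow (2 * n / 3 + 1), f p :=
    (prod_filter_of_ne fun p _ hp => by
      by_contra h
      simp [f, Nat.factorization_eq_zero_of_not_prime _ h] at hp).symm
  rw [hprimes, ← prod_filter_mul_prod_filter_not _ (· ≤ Nat.sqrt (2 * n))]
  gcongr
  · calc ∏ p ∈ (Nat.primesBelow (2 * n / 3 + 1)).filter (· ≤ Nat.sqrt (2 * n)), f p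
        ≤ ∏ p ∈ (Nat.primesBelow (2 * n / 3 + 1)).filter (· ≤ Nat.sqrt (2 * n)), 2 * n :=
          prod_le_prod' fun p _ => Nat.pow_factorization_choose_le (by omega)
      _ ≤ (2 * n) ^ Nat.sqrt (2 * n) := by
          rw [prod_const]
          refine Nat.pow_le_pow_right (by omega) ?_
          refine (card_le_card fun p hp => ?_).trans (Nat.card_Icc 1 _).le
          simp only [mem_filter, Nat.mem_primesBelow] at hp
          exact mem_Icc.2 ⟨hp.1.2.one_le, hp.2⟩
  · calc ∏ p ∈ (Nat.primesBelow (2 * n / 3 + 1)).filter (¬ · ≤ Nat.sqrt (2 * n)), f p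
        ≤ ∏ p ∈ (Nat.primesBelow (2 * n / 3 + 1)).filter (¬ · ≤ Nat.sqrt (2 * n)), p :=
          prod_le_prod' fun p hp => by
            simp only [mem_filter, Nat.mem_primesBelow, not_le] at hp
            exact (Nat.pow_le_pow_right hp.1.2.pos
              (Nat.factorization_choose_le_one (Nat.sqrt_lt'.1 hp.2))).trans (pow_one p).le
      _ ≤ primorial (2 * n / 3) :=
          prod_le_prod_of_subset_of_one_le' (filter_subset _ _)
            fun p hp _ => (Nat.prime_of_mem_primesBelow hp).one_le
      _ ≤ 4 ^ (2 * n / 3) := primorial_le_four_pow _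

theorem centralBinom_le_of_no_prime_lt_two_mul_sub_two {n : ℕ} (hn : 2 < n)
    (no_prime : ∀ p, p.Prime → n < p → 2 * n ≤ p + 2) :
    n.centralBinom ≤ (2 * n) ^ Nat.sqrt (2 * n) * 4 ^ (2 * n / 3) * (2 * n) := by
  set f : ℕ → ℕ := fun p => p ^ n.centralBinom.factorization p
  have hsub : insert (2 * n - 1) (range (2 * n / 3 + 1)) ⊆ range (2 * n + 1) := by
    intro p hp
    simp only [mem_insert, mem_range] at hp ⊢
    omega
  have hone : ∀ p ∈ range (2 * n + 1), p ∉ insert (2 * n - 1) (range (2 * n / 3 + 1)) →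
      f p = 1 := by
    intro p hp hp'
    simp only [mem_insert, mem_range, not_or] at hp hp'
    by_cases hprime : p.Prime
    · suffices n.centralBinom.factorization p = 0 by simp [f, this]
      rcases le_or_gt p n with hpn | hpn
      · exact Nat.factorization_centralBinom_of_two_mul_self_lt_three_mul hn hpn (by omega)
      · -- the only candidates left, `2 * n - 2` and `2 * n`, are even
        have h2 := hprime.eq_one_or_self_of_dvd 2
          (by rw [Nat.dvd_iff_mod_eq_zero]; have := no_prime p hprime hpn; omega)
        omega
    · simp [f, Nat.factorization_eq_zero_of_not_prime _ hprime]
  have hnotmem : 2 * n - 1 ∉ range (2 * n / 3 + 1) := by simp only [mem_range]; omega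
  rw [← Nat.prod_pow_factorization_centralBinom, ← prod_subset hsub hone, prod_insert hnotmem,
    mul_comm]
  gcongr
  · exact prod_pow_factorization_centralBinom_le (by omega)
  · exact Nat.pow_factorization_choose_le (by omega)

theorem exists_prime_lt_and_add_two_lt_two_mul_of_le {n : ℕ} (hn : 512 ≤ n) :
    ∃ p, p.Prime ∧ n < p ∧ p + 2 < 2 * n := by
  by_contra! no_prime
  have hbound := centralBinom_le_of_no_prime_lt_two_mul_sub_two (by omega) no_prime
  have := calc 4 ^ n < n * n.centralBinom := Nat.four_pow_lt_mul_centralBinom n (by omega)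
    _ ≤ n * ((2 * n) ^ Nat.sqrt (2 * n) * 4 ^ (2 * n / 3) * (2 * n)) := by gcongr
    _ = 2 * n ^ 2 * (2 * n) ^ Nat.sqrt (2 * n) * 4 ^ (2 * n / 3) := by ring
    _ ≤ 4 ^ n := two_mul_sq_mul_pow_sqrt_mul_four_pow_le hn
  exact this.false

theorem exists_prime_lt_and_add_two_lt_two_mul_of_lt {n : ℕ} (hn : 3 < n) (hn' : n < 512) :
    ∃ p, p.Prime ∧ n < p ∧ p + 2 < 2 * n := by
  obtain ⟨p, hp, hnp⟩ :
      ∃ p ∈ [5, 7, 11, 13, 23, 37, 71, 137, 263, 521], n < p ∧ p + 2 < 2 * n := by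
    simp only [List.exists_mem_cons_iff, List.not_mem_nil]
    omega
  refine ⟨p, ?_, hnp⟩
  simp only [List.mem_cons, List.not_mem_nil, or_false] at hp
  rcases hp with rfl | rfl | rfl | rfl | rfl | rfl | rfl | rfl | rfl | rfl <;> norm_num

theorem exists_prime_lt_and_add_two_lt_two_mul {n : ℕ} (hn : 3 < n) :
    ∃ p, p.Prime ∧ n < p ∧ p + 2 < 2 * n :=
  (lt_or_ge n 512).elim (exists_prime_lt_and_add_two_lt_two_mul_of_lt hn)
    exists_prime_lt_and_add_two_lt_two_mul_of_le

theorem stmt_4 (n : ℕ) (hn : 3 < n) :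
    ∃ x : ℕ, 0 < x ∧ x < n - 2 ∧ Nat.totient (n + x) + 1 = n + x := by
  obtain ⟨p, hp, hnp, hpn⟩ := exists_prime_lt_and_add_two_lt_two_mul hn
  refine ⟨p - n, by omega, by omega, ?_⟩
  rw [Nat.add_sub_cancel' hnp.le, Nat.totient_prime hp, Nat.sub_add_cancel hp.one_le]
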